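/- arXiv:1901.03826 — 3 statements merged into one kernel-verified Lean document; each statement's English description precedes it below -/
import Mathlib

section
/- For every real number s, every nonzero real number ω, and every sequence c : ℕ → [0,∞] of extended nonnegative reals, setting α₁ = min{1/3, 2√π·ω²} and α₂ = max{1/2, 2√π·ω²}, one has α₁² · ∑_{ℓ=0}^∞ (ℓ+1)^{2s} c_ℓ ≤ 4π ω⁴ c₀ + ∑_{ℓ=1}^∞ (ℓ+1)^{2s} · (ℓ²/(2ℓ+1)²) · c_ℓ ≤ α₂² · ∑_{ℓ=0}^∞ (ℓ+1)^{2s} c_ℓ. -/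
open scoped ENNReal

lemma NS_denom_ne_zero (ℓ : ℕ) : (2 * (ℓ : ℝ≥0∞) + 1) ^ 2 ≠ 0 :=
  pow_ne_zero _ (by simp)

lemma NS_denom_ne_top (ℓ : ℕ) : (2 * (ℓ : ℝ≥0∞) + 1) ^ 2 ≠ ⊤ :=
  ENNReal.pow_ne_top (ENNReal.add_ne_top.mpr
    ⟨ENNReal.mul_ne_top (by simp) (ENNReal.natCast_ne_top ℓ), ENNReal.one_ne_top⟩)

lemma NS_ratio_lb (ℓ : ℕ) (hℓ : 1 ≤ ℓ) :
    (1/9 : ℝ≥0∞) ≤ (ℓ : ℝ≥0∞) ^ 2 / (2 * (ℓ : ℝ≥0∞) + 1) ^ 2 := by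
  rw [ENNReal.le_div_iff_mul_le (Or.inl (NS_denom_ne_zero ℓ)) (Or.inl (NS_denom_ne_top ℓ))]
  rw [one_div, mul_comm, ← div_eq_mul_inv,
    ENNReal.div_le_iff_le_mul (Or.inl (by norm_num)) (Or.inl (by norm_num))]
  have h1 : ℓ ≤ ℓ * ℓ := Nat.le_mul_of_pos_left ℓ hℓ
  have hn : (2 * ℓ + 1) ^ 2 ≤ ℓ ^ 2 * 9 := by nlinarith [h1, hℓ]
  calc (2 * (ℓ : ℝ≥0∞) + 1) ^ 2 = ((2 * ℓ + 1 : ℕ) : ℝ≥0∞) ^ 2 := by push_cast; ring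
    _ ≤ ((ℓ ^ 2 * 9 : ℕ) : ℝ≥0∞) := by
        exact_mod_cast Nat.cast_le.mpr (by push_cast; exact_mod_cast hn)
    _ = (ℓ : ℝ≥0∞) ^ 2 * 9 := by push_cast; ring

lemma NS_ratio_ub (ℓ : ℕ) :
    (ℓ : ℝ≥0∞) ^ 2 / (2 * (ℓ : ℝ≥0∞) + 1) ^ 2 ≤ 1/4 := by
  rw [ENNReal.div_le_iff_le_mul (Or.inl (NS_denom_ne_zero ℓ)) (Or.inl (NS_denom_ne_top ℓ))]
  rw [one_div, mul_comm, ← div_eq_mul_inv,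
    ENNReal.le_div_iff_mul_le (Or.inl (by norm_num)) (Or.inl (by norm_num))]
  have hn : ℓ ^ 2 * 4 ≤ (2 * ℓ + 1) ^ 2 := by
    have h : (2 * ℓ + 1) ^ 2 = ℓ ^ 2 * 4 + (4 * ℓ + 1) := by ring
    omega
  calc (ℓ : ℝ≥0∞) ^ 2 * 4 = ((ℓ ^ 2 * 4 : ℕ) : ℝ≥0∞) := by push_cast; ring
    _ ≤ (((2 * ℓ + 1) ^ 2 : ℕ) : ℝ≥0∞) := by exact_mod_cast Nat.cast_le.mpr hn
    _ = (2 * (ℓ : ℝ≥0∞) + 1) ^ 2 := by push_cast; ring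

/-- Two-sided mapping bound for the operator `N* v = -Nv + ω² ∫ v dσ` in terms of
spherical harmonic coefficient sums: with `c ℓ = ∑ₘ |v̂_{ℓ,m}|²`,
`α₁² ‖v‖²_{H^s} ≤ ‖N* v‖²_{H^{s-1}} ≤ α₂² ‖v‖²_{H^s}`. -/
theorem Nstar_two_sided_bound (s ω : ℝ) (hω : ω ≠ 0) (c : ℕ → ℝ≥0∞) :
    ENNReal.ofReal ((min (1 / 3) (2 * Real.sqrt Real.pi * ω ^ 2)) ^ 2) *
        ∑' ℓ : ℕ, ((ℓ : ℝ≥0∞) + 1) ^ (2 * s) * c ℓ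
      ≤ ENNReal.ofReal (4 * Real.pi * ω ^ 4) * c 0 +
        ∑' ℓ : ℕ, ((ℓ : ℝ≥0∞) + 1) ^ (2 * s) *
          ((ℓ : ℝ≥0∞) ^ 2 / (2 * (ℓ : ℝ≥0∞) + 1) ^ 2) * c ℓ ∧
    ENNReal.ofReal (4 * Real.pi * ω ^ 4) * c 0 +
        ∑' ℓ : ℕ, ((ℓ : ℝ≥0∞) + 1) ^ (2 * s) *
          ((ℓ : ℝ≥0∞) ^ 2 / (2 * (ℓ : ℝ≥0∞) + 1) ^ 2) * c ℓ
      ≤ ENNReal.ofReal ((max (1 / 2) (2 * Real.sqrt Real.pi * ω ^ 2)) ^ 2) *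
        ∑' ℓ : ℕ, ((ℓ : ℝ≥0∞) + 1) ^ (2 * s) * c ℓ := by
  set α₁ : ℝ := min (1 / 3) (2 * Real.sqrt Real.pi * ω ^ 2) with hα₁
  set α₂ : ℝ := max (1 / 2) (2 * Real.sqrt Real.pi * ω ^ 2) with hα₂
  have hsp : 0 < 2 * Real.sqrt Real.pi * ω ^ 2 := by
    have : 0 < Real.sqrt Real.pi := Real.sqrt_pos.mpr Real.pi_pos
    positivity
  have hsq : (2 * Real.sqrt Real.pi * ω ^ 2) ^ 2 = 4 * Real.pi * ω ^ 4 := by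
    have h : Real.sqrt Real.pi ^ 2 = Real.pi := Real.sq_sqrt Real.pi_nonneg
    rw [mul_pow, mul_pow, h]; ring
  have hα₁0 : 0 ≤ α₁ := le_min (by norm_num) hsp.le
  -- A ≤ B and A ≤ 1/9 ; B ≤ C and 1/4 ≤ C
  set A : ℝ≥0∞ := ENNReal.ofReal (α₁ ^ 2) with hA
  set B : ℝ≥0∞ := ENNReal.ofReal (4 * Real.pi * ω ^ 4) with hB
  set C : ℝ≥0∞ := ENNReal.ofReal (α₂ ^ 2) with hC
  have hAB : A ≤ B := by
    rw [hA, hB, ← hsq]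
    exact ENNReal.ofReal_le_ofReal (pow_le_pow_left₀ hα₁0 (min_le_right _ _) 2)
  have hA9 : A ≤ 1/9 := by
    have h1 : α₁ ^ 2 ≤ (1/3 : ℝ) ^ 2 := pow_le_pow_left₀ hα₁0 (min_le_left _ _) 2
    calc A ≤ ENNReal.ofReal ((1/3 : ℝ) ^ 2) := ENNReal.ofReal_le_ofReal h1
      _ = 1/9 := by
        rw [show ((1:ℝ)/3)^2 = 1/9 by norm_num,
          ENNReal.ofReal_div_of_pos (by norm_num)]
        norm_num
  have hBC : B ≤ C := by
    rw [hB, hC, ← hsq]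
    exact ENNReal.ofReal_le_ofReal (pow_le_pow_left₀ hsp.le (le_max_right _ _) 2)
  have h4C : (1/4 : ℝ≥0∞) ≤ C := by
    have h1 : ((1:ℝ)/2) ^ 2 ≤ α₂ ^ 2 :=
      pow_le_pow_left₀ (by norm_num) (le_max_left _ _) 2
    calc (1/4 : ℝ≥0∞) = ENNReal.ofReal ((1/2 : ℝ) ^ 2) := by
          rw [show ((1:ℝ)/2)^2 = 1/4 by norm_num,
            ENNReal.ofReal_div_of_pos (by norm_num)]
          norm_num
      _ ≤ C := ENNReal.ofReal_le_ofReal h1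
  set f : ℕ → ℝ≥0∞ := fun ℓ => ((ℓ : ℝ≥0∞) + 1) ^ (2 * s) with hf
  set r : ℕ → ℝ≥0∞ := fun ℓ => (ℓ : ℝ≥0∞) ^ 2 / (2 * (ℓ : ℝ≥0∞) + 1) ^ 2 with hr
  have hf0 : f 0 = 1 := by simp [hf]
  have hr0 : r 0 = 0 := by simp [hr]
  have hsplit : (∑' ℓ : ℕ, ((if ℓ = 0 then B * c 0 else 0) + f ℓ * r ℓ * c ℓ))
      = B * c 0 + ∑' ℓ : ℕ, f ℓ * r ℓ * c ℓ := by
    rw [ENNReal.tsum_add, tsum_ite_eq]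
  constructor
  · rw [← ENNReal.tsum_mul_left, ← hsplit]
    refine ENNReal.tsum_le_tsum fun ℓ => ?_
    match ℓ with
    | 0 =>
      simp only [Nat.cast_zero, zero_add, ENNReal.one_rpow, one_mul, if_pos rfl,
        zero_pow, ne_eq, OfNat.ofNat_ne_zero, not_false_iff, ENNReal.zero_div,
        mul_zero, zero_mul, add_zero, hf0, hr0, if_true]
      exact mul_le_mul' hAB le_rfl
    | (n+1) =>
      have h1 : A ≤ r (n+1) := hA9.trans (NS_ratio_lb (n+1) (Nat.succ_le_succ n.zero_le))
      calc A * (f (n+1) * c (n+1)) = f (n+1) * A * c (n+1) := by ring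
        _ ≤ f (n+1) * r (n+1) * c (n+1) :=
            mul_le_mul' (mul_le_mul' le_rfl h1) le_rfl
        _ ≤ (if (n+1 : ℕ) = 0 then B * c 0 else 0) + f (n+1) * r (n+1) * c (n+1) :=
            le_add_self
  · rw [← ENNReal.tsum_mul_left, ← hsplit]
    refine ENNReal.tsum_le_tsum fun ℓ => ?_
    match ℓ with
    | 0 =>
      simp only [Nat.cast_zero, zero_add, ENNReal.one_rpow, one_mul, if_pos rfl,
        zero_pow, ne_eq, OfNat.ofNat_ne_zero, not_false_iff, ENNReal.zero_div,
        mul_zero, zero_mul, add_zero, hf0, hr0, if_true]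
      exact mul_le_mul' hBC le_rfl
    | (n+1) =>
      have h1 : r (n+1) ≤ C := (NS_ratio_ub (n+1)).trans h4C
      simp only [if_neg (Nat.succ_ne_zero n), zero_add]
      calc f (n+1) * r (n+1) * c (n+1) ≤ f (n+1) * C * c (n+1) :=
            mul_le_mul' (mul_le_mul' le_rfl h1) le_rfl
        _ = C * (f (n+1) * c (n+1)) := by ring
end

section
/- For every nonzero real number ω and every sequence c : ℕ → [0,∞] of extended nonnegative reals, setting α₁ = min{1/3, 2√π·ω²}, one has 2√π·ω²·c₀ + ∑_{ℓ=1}^∞ [ℓ(ℓ+1)/(2ℓ+1)] c_ℓ ≥ α₁ · ∑_{ℓ=0}^∞ (ℓ+1) c_ℓ. -/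
open scoped ENNReal

/-- Coercivity of the bilinear form of the hypersingular equation in terms of
spherical harmonic coefficient sums: with `c ℓ = ∑ₘ |v̂_{ℓ,m}|²`,
`a(v,v) ≥ α₁ ‖v‖²_{H^{1/2}}` where `α₁ = min{1/3, 2√π ω²}`. -/
theorem hypersingular_coercivity (ω : ℝ) (hω : ω ≠ 0) (c : ℕ → ℝ≥0∞) :
    ENNReal.ofReal (min (1 / 3) (2 * Real.sqrt Real.pi * ω ^ 2)) *
        ∑' ℓ : ℕ, ((ℓ : ℝ≥0∞) + 1) * c ℓ
      ≤ ENNReal.ofReal (2 * Real.sqrt Real.pi * ω ^ 2) * c 0 +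
        ∑' ℓ : ℕ, ((ℓ : ℝ≥0∞) * ((ℓ : ℝ≥0∞) + 1) / (2 * (ℓ : ℝ≥0∞) + 1)) * c ℓ := by
  set α : ℝ≥0∞ := ENNReal.ofReal (min (1 / 3) (2 * Real.sqrt Real.pi * ω ^ 2)) with hα
  set A : ℝ≥0∞ := ENNReal.ofReal (2 * Real.sqrt Real.pi * ω ^ 2) with hA
  have hαA : α ≤ A := ENNReal.ofReal_le_ofReal (min_le_right _ _)
  have hα3 : α ≤ (3 : ℝ≥0∞)⁻¹ := by
    refine le_trans (ENNReal.ofReal_le_ofReal (min_le_left _ _)) ?_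
    rw [ENNReal.ofReal_div_of_pos (by norm_num)]
    simp [ENNReal.ofReal_one, one_div, ENNReal.ofReal_ofNat]
  rw [← ENNReal.tsum_mul_left,
    ENNReal.tsum_eq_add_tsum_ite (f := fun ℓ : ℕ => α * (((ℓ : ℝ≥0∞) + 1) * c ℓ)) 0]
  refine add_le_add ?_ ?_
  · simpa using mul_le_mul_left hαA (c 0)
  · refine le_trans (ENNReal.tsum_le_tsum fun ℓ => ?_) le_rfl
    rcases ℓ with _ | n
    · simp
    · simp only [if_neg (Nat.succ_ne_zero n)]
      push_cast
      rw [← mul_assoc]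
      refine mul_le_mul_left ?_ (c (n + 1))
      refine le_trans (mul_le_mul_left hα3 _) ?_
      -- 3⁻¹ * (n+1+1) ≤ (n+1)*(n+1+1)/(2(n+1)+1)
      rw [ENNReal.le_div_iff_mul_le (Or.inl (by simp)) (Or.inl (by finiteness))]
      have h1 : (3 : ℝ≥0∞)⁻¹ * (((n : ℝ≥0∞) + 1 + 1)) * (2 * ((n : ℝ≥0∞) + 1) + 1)
          ≤ (3 : ℝ≥0∞)⁻¹ * (((n : ℝ≥0∞) + 1 + 1)) * (3 * ((n : ℝ≥0∞) + 1)) := by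
        gcongr
        calc 2 * ((n : ℝ≥0∞) + 1) + 1 ≤ 2 * ((n : ℝ≥0∞) + 1) + ((n : ℝ≥0∞) + 1) := by
              gcongr; exact le_add_self
          _ = 3 * ((n : ℝ≥0∞) + 1) := by ring
      refine le_trans h1 (le_of_eq ?_)
      rw [mul_comm ((3 : ℝ≥0∞)⁻¹) _, mul_assoc, ← mul_assoc ((3:ℝ≥0∞)⁻¹),
        ENNReal.inv_mul_cancel (by norm_num) (by norm_num), one_mul, mul_comm]
end

section
/- Let ω be a nonzero real number and set α₂ = max{1/2, 2√π·ω²}. Let û and v̂ be real double sequences indexed by ℓ ∈ ℕ and m ∈ ℤ, vanishing whenever |m| > ℓ, and assume ∑_{ℓ,m} (ℓ+1) û_{ℓ,m}² < ∞ and ∑_{ℓ,m} (ℓ+1) v̂_{ℓ,m}² < ∞. Then the series a(u,v) := 2√π·ω²·û_{0,0} v̂_{0,0} + ∑_{ℓ≥1} ∑_{|m|≤ℓ} [ℓ(ℓ+1)/(2ℓ+1)] û_{ℓ,m} v̂_{ℓ,m} converges absolutely, and |a(u,v)| ≤ α₂ · (∑_{ℓ,m} (ℓ+1) û_{ℓ,m}²)^{1/2}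 · (∑_{ℓ,m} (ℓ+1) v̂_{ℓ,m}²)^{1/2}. -/
/-! The symbol `ℓ(ℓ+1)/(2ℓ+1)` is at most `(ℓ+1)/2` and vanishes at `ℓ = 0`, so once the
constant mode `2√π ω² û₀₀ v̂₀₀` is folded into the series, every coefficient of the form is
bounded by `α₂ (ℓ+1)`. The estimate is then the Cauchy–Schwarz inequality in the `ℓ²` space
with weights `ℓ+1`. -/

open Real

section WeightedCauchySchwarz

variable {ι : Type*}

theorem Real.summable_and_tsum_mul_le_sqrt_mul_sqrt {f g : ι → ℝ} (hf : ∀ i, 0 ≤ f i)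
    (hg : ∀ i, 0 ≤ g i) (hf2 : Summable fun i => f i ^ 2) (hg2 : Summable fun i => g i ^ 2) :
    (Summable fun i => f i * g i) ∧
      ∑' i, f i * g i ≤ √(∑' i, f i ^ 2) * √(∑' i, g i ^ 2) := by
  simp only [← rpow_two] at hf2 hg2
  simpa only [← rpow_two, ← sqrt_eq_rpow] using
    summable_and_inner_le_Lp_mul_Lq_tsum_of_nonneg .two_two hf hg hf2 hg2

theorem summable_and_tsum_mul_abs_mul_abs_le {w f g : ι → ℝ} (hw : ∀ i, 0 ≤ w i)
    (hf : Summable fun i => w i * f i ^ 2) (hg : Summable fun i => w i * g i ^ 2) :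
    (Summable fun i => w i * (|f i| * |g i|)) ∧
      ∑' i, w i * (|f i| * |g i|) ≤ √(∑' i, w i * f i ^ 2) * √(∑' i, w i * g i ^ 2) := by
  have hsq (h : ι → ℝ) (i : ι) : (√(w i) * |h i|) ^ 2 = w i * h i ^ 2 := by
    rw [mul_pow, sq_sqrt (hw i), sq_abs]
  have hmul (i : ι) : √(w i) * |f i| * (√(w i) * |g i|) = w i * (|f i| * |g i|) := by
    rw [mul_mul_mul_comm, mul_self_sqrt (hw i)]
  simpa only [hsq, hmul] using Real.summable_and_tsum_mul_le_sqrt_mul_sqrt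
    (fun i => by positivity) (fun i => by positivity) (f := fun i => √(w i) * |f i|)
    (g := fun i => √(w i) * |g i|) (by simpa only [hsq] using hf) (by simpa only [hsq] using hg)

theorem summable_and_abs_tsum_mul_mul_le {μ w f g : ι → ℝ} {C : ℝ} (hC : 0 ≤ C)
    (hw : ∀ i, 0 ≤ w i) (hμ : ∀ i, |μ i| ≤ C * w i)
    (hf : Summable fun i => w i * f i ^ 2) (hg : Summable fun i => w i * g i ^ 2) :
    (Summable fun i => |μ i * f i * g i|) ∧
      |∑' i, μ i * f i * g i| ≤ C * √(∑' i, w i * f i ^ 2) * √(∑' i, w i * g i ^ 2) := by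
  obtain ⟨hsum, hcs⟩ := summable_and_tsum_mul_abs_mul_abs_le hw hf hg
  have hdom (i : ι) : |μ i * f i * g i| ≤ C * (w i * (|f i| * |g i|)) := by
    rw [abs_mul, abs_mul, mul_assoc, ← mul_assoc C]
    gcongr
    exact hμ i
  have habs : Summable fun i => |μ i * f i * g i| :=
    Summable.of_nonneg_of_le (fun i => abs_nonneg _) hdom (hsum.mul_left C)
  refine ⟨habs, ?_⟩
  calc |∑' i, μ i * f i * g i| ≤ ∑' i, |μ i * f i * g i| := by
        simpa only [Real.norm_eq_abs] using
          norm_tsum_le_tsum_norm (f := fun i => μ i * f i * g i) (by simpa only [Real.norm_eq_abs])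
    _ ≤ ∑' i, C * (w i * (|f i| * |g i|)) := habs.tsum_le_tsum hdom (hsum.mul_left C)
    _ = C * ∑' i, w i * (|f i| * |g i|) := tsum_mul_left
    _ ≤ C * √(∑' i, w i * f i ^ 2) * √(∑' i, w i * g i ^ 2) := by
        rw [mul_assoc]
        exact mul_le_mul_of_nonneg_left hcs hC

end WeightedCauchySchwarz

theorem mul_add_one_div_two_mul_add_one_le {x : ℝ} (hx : 0 ≤ x) :
    x * (x + 1) / (2 * x + 1) ≤ (x + 1) / 2 := by
  rw [div_le_div_iff₀ (by positivity) two_pos]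
  nlinarith

theorem mul_add_tsum_eq_tsum_add_ite_mul {ι : Type*} [DecidableEq ι] {σ f g : ι → ℝ} {c : ℝ}
    {i₀ : ι} (hσ : Summable fun i => σ i * f i * g i) :
    c * f i₀ * g i₀ + ∑' i, σ i * f i * g i =
      ∑' i, (σ i + if i = i₀ then c else 0) * f i * g i := by
  have hsingle : HasSum (fun i => (if i = i₀ then c else 0) * f i * g i) (c * f i₀ * g i₀) := by
    simpa using hasSum_single i₀ (f := fun i => (if i = i₀ then c else 0) * f i * g i)
      fun i hi => by simp [hi]
  simp only [add_mul]
  rw [hσ.tsum_add hsingle.summable, hsingle.tsum_eq, add_comm]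

theorem hypersingular_boundedness_general (ω : ℝ)
    (uh vh : ℕ → ℤ → ℝ)
    (hus : Summable fun p : ℕ × ℤ => ((p.1 : ℝ) + 1) * (uh p.1 p.2) ^ 2)
    (hvs : Summable fun p : ℕ × ℤ => ((p.1 : ℝ) + 1) * (vh p.1 p.2) ^ 2) :
    Summable (fun p : ℕ × ℤ =>
      |(p.1 : ℝ) * ((p.1 : ℝ) + 1) / (2 * (p.1 : ℝ) + 1) * uh p.1 p.2 * vh p.1 p.2|) ∧
    |2 * Real.sqrt Real.pi * ω ^ 2 * uh 0 0 * vh 0 0 +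
        ∑' p : ℕ × ℤ, (p.1 : ℝ) * ((p.1 : ℝ) + 1) / (2 * (p.1 : ℝ) + 1) *
          uh p.1 p.2 * vh p.1 p.2|
      ≤ max (1 / 2) (2 * Real.sqrt Real.pi * ω ^ 2) *
        Real.sqrt (∑' p : ℕ × ℤ, ((p.1 : ℝ) + 1) * (uh p.1 p.2) ^ 2) *
        Real.sqrt (∑' p : ℕ × ℤ, ((p.1 : ℝ) + 1) * (vh p.1 p.2) ^ 2) := by
  set c := 2 * √π * ω ^ 2
  set σ : ℕ × ℤ → ℝ := fun p => (p.1 : ℝ) * ((p.1 : ℝ) + 1) / (2 * (p.1 : ℝ) + 1)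
  have hσ (p : ℕ × ℤ) : |σ p| ≤ 1 / 2 * ((p.1 : ℝ) + 1) := by
    rw [abs_of_nonneg (by positivity), one_div_mul_eq_div]
    exact mul_add_one_div_two_mul_add_one_le p.1.cast_nonneg
  obtain ⟨hσ_summable, -⟩ :=
    summable_and_abs_tsum_mul_mul_le (by norm_num) (fun p => by positivity) hσ hus hvs
  refine ⟨hσ_summable, ?_⟩
  set μ : ℕ × ℤ → ℝ := fun p => σ p + if p = (0, 0) then c else 0
  have hμ (p : ℕ × ℤ) : |μ p| ≤ max (1 / 2) c * ((p.1 : ℝ) + 1) := by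
    by_cases hp : p = (0, 0)
    · simp [μ, σ, hp, abs_of_nonneg (show 0 ≤ c by positivity)]
    · simp only [μ, hp, if_false, add_zero]
      exact (hσ p).trans (by gcongr; exact le_max_left _ _)
  convert (summable_and_abs_tsum_mul_mul_le (le_max_of_le_left (by norm_num))
    (fun p => by positivity) hμ hus hvs).2 using 2
  exact mul_add_tsum_eq_tsum_add_ite_mul (c := c) (i₀ := (0, 0)) hσ_summable.of_abs

/-- Boundedness of the bilinear form of the hypersingular equation in terms of
spherical harmonic coefficients: the defining series converges absolutely and
`|a(u,v)| ≤ α₂ ‖u‖_{H^{1/2}} ‖v‖_{H^{1/2}}` with `α₂ = max{1/2, 2√π ω²}`. -/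
theorem hypersingular_boundedness (ω : ℝ) (hω : ω ≠ 0)
    (uh vh : ℕ → ℤ → ℝ)
    (hu0 : ∀ (ℓ : ℕ) (m : ℤ), (ℓ : ℤ) < |m| → uh ℓ m = 0)
    (hv0 : ∀ (ℓ : ℕ) (m : ℤ), (ℓ : ℤ) < |m| → vh ℓ m = 0)
    (hus : Summable fun p : ℕ × ℤ => ((p.1 : ℝ) + 1) * (uh p.1 p.2) ^ 2)
    (hvs : Summable fun p : ℕ × ℤ => ((p.1 : ℝ) + 1) * (vh p.1 p.2) ^ 2) :
    Summable (fun p : ℕ × ℤ =>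
      |(p.1 : ℝ) * ((p.1 : ℝ) + 1) / (2 * (p.1 : ℝ) + 1) * uh p.1 p.2 * vh p.1 p.2|) ∧
    |2 * Real.sqrt Real.pi * ω ^ 2 * uh 0 0 * vh 0 0 +
        ∑' p : ℕ × ℤ, (p.1 : ℝ) * ((p.1 : ℝ) + 1) / (2 * (p.1 : ℝ) + 1) *
          uh p.1 p.2 * vh p.1 p.2|
      ≤ max (1 / 2) (2 * Real.sqrt Real.pi * ω ^ 2) *
        Real.sqrt (∑' p : ℕ × ℤ, ((p.1 : ℝ) + 1) * (uh p.1 p.2) ^ 2) *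
        Real.sqrt (∑' p : ℕ × ℤ, ((p.1 : ℝ) + 1) * (vh p.1 p.2) ^ 2) :=
  hypersingular_boundedness_general ω uh vh hus hvs
end
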